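/- Let (μ_t)_{t≥0} be a monotone convolution semigroup with reciprocal Cauchy transforms (H_t)_{t≥0} (so H_{s+t} = H_s ∘ H_t and H_0 = id on ℂ⁺), and define transition operators T_t f(x) = ∫_ℝ f dμ_{t,x} where μ_{t,x} = δ_x ▷ μ_t has reciprocal Cauchy transform H_t(z) − x. Then (T_t)_{t≥0} is a semigroup on C_b(ℝ): T_s(T_t f) = T_{s+t} f for all s, t ≥ 0 and f ∈ C_b(ℝ). -/

import Mathlib

/-!
The semigroup law says that the probability measures `∫ μ_{t,y} dμ_{s,x}(y)` and `μ_{s+t,x}`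
agree. Their Cauchy transforms agree on the upper half-plane: integrating the resolvent
`(z - u)⁻¹` first against `μ_{t,y}` gives `(H_t z - y)⁻¹`, and then against `μ_{s,x}` gives
`(H_s (H_t z) - x)⁻¹ = (H_{s+t} z - x)⁻¹`. A finite measure `m` on `ℝ` is determined by its
Cauchy transform `G`, because `-Im G (x + iε)` is the Poisson integral `∫ ε / ((x-u)² + ε²) dm(u)`,
and pairing it with a bounded continuous `f` tends to `π ∫ f dm` as `ε → 0⁺`.
-/

open MeasureTheory Real Filter Topology ProbabilityTheory

noncomputable section

def cauchyTransform (m : Measure ℝ) (z : ℂ) : ℂ := ∫ u : ℝ, (z - u)⁻¹ ∂m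

def halfPlanePoissonKernel (e x u : ℝ) : ℝ := e / ((x - u) ^ 2 + e ^ 2)

/-- `π` times the mean of `f` under the Cauchy distribution with location `u` and scale `e`. -/
def cauchyAverage (f : ℝ → ℝ) (e u : ℝ) : ℝ := ∫ v, f (u + e * v) * (1 + v ^ 2)⁻¹

end

section HalfPlanePoissonKernel

variable {e : ℝ}

theorem halfPlanePoissonKernel_nonneg (he : 0 < e) (x u : ℝ) :
    0 ≤ halfPlanePoissonKernel e x u := by
  unfold halfPlanePoissonKernel; positivity

theorem continuous_halfPlanePoissonKernel (he : 0 < e) :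
    Continuous fun p : ℝ × ℝ => halfPlanePoissonKernel e p.1 p.2 :=
  continuous_const.div (by fun_prop) fun _ => by positivity

theorem integral_mul_halfPlanePoissonKernel (he : 0 < e) (g : ℝ → ℝ) (u : ℝ) :
    ∫ x, g x * halfPlanePoissonKernel e x u = cauchyAverage g e u := by
  set h : ℝ → ℝ := fun w => g (w + u) * halfPlanePoissonKernel e (w + u) u
  calc ∫ x, g x * halfPlanePoissonKernel e x u = ∫ w, h w :=
        (integral_add_right_eq_self (fun x => g x * halfPlanePoissonKernel e x u) u).symm
    _ = e * ∫ v, h (e * v) := by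
        rw [Measure.integral_comp_mul_left h, abs_of_pos (inv_pos.2 he), smul_eq_mul,
          mul_inv_cancel_left₀ he.ne']
    _ = cauchyAverage g e u := by
        rw [cauchyAverage, ← integral_const_mul]
        congr 1 with v
        simp only [h, halfPlanePoissonKernel, add_sub_cancel_right, add_comm (e * v) u]
        field_simp
        ring

theorem integral_halfPlanePoissonKernel (he : 0 < e) (u : ℝ) :
    ∫ x, halfPlanePoissonKernel e x u = π := by
  simpa [cauchyAverage] using integral_mul_halfPlanePoissonKernel he (fun _ => 1) u

theorem integrable_halfPlanePoissonKernel (he : 0 < e) (u : ℝ) :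
    Integrable fun x => halfPlanePoissonKernel e x u :=
  .of_integral_ne_zero <| (integral_halfPlanePoissonKernel he u).trans_ne pi_ne_zero

end HalfPlanePoissonKernel

theorem im_inv_sub_ofReal (w : ℂ) (y : ℝ) :
    ((w - y)⁻¹).im = -halfPlanePoissonKernel w.im w.re y := by
  simp only [Complex.inv_im, Complex.normSq_apply, Complex.sub_re, Complex.sub_im,
    Complex.ofReal_re, Complex.ofReal_im, sub_zero, halfPlanePoissonKernel]
  ring

theorem norm_inv_sub_ofReal_le {z : ℂ} (hz : 0 < z.im) (u : ℝ) : ‖(z - u)⁻¹‖ ≤ z.im⁻¹ := by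
  rw [norm_inv]
  refine inv_anti₀ hz ?_
  simpa [abs_of_pos hz] using Complex.abs_im_le_norm (z - u)

theorem integrable_inv_sub_ofReal (m : Measure ℝ) [IsFiniteMeasure m] {z : ℂ} (hz : 0 < z.im) :
    Integrable (fun u : ℝ => (z - u)⁻¹) m := by
  have hne : ∀ u : ℝ, z - u ≠ 0 := fun u h => by simpa [hz.ne'] using congrArg Complex.im h
  exact .of_bound (by fun_prop (disch := exact hne _)) z.im⁻¹
    (.of_forall (norm_inv_sub_ofReal_le hz))

theorem integral_halfPlanePoissonKernel_eq_neg_im_cauchyTransform (m : Measure ℝ)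
    [IsFiniteMeasure m] {z : ℂ} (hz : 0 < z.im) :
    ∫ u, halfPlanePoissonKernel z.im z.re u ∂m = -(cauchyTransform m z).im := by
  have him := integral_im (integrable_inv_sub_ofReal m hz)
  simp only [RCLike.im_to_complex] at him
  rw [cauchyTransform, ← him, ← integral_neg]
  simp_rw [im_inv_sub_ofReal, neg_neg]

namespace BoundedContinuousFunction

variable (f : ℝ →ᵇ ℝ)

theorem norm_apply_mul_inv_one_add_sq_le (x v : ℝ) :
    ‖f x * (1 + v ^ 2)⁻¹‖ ≤ ‖f‖ * (1 + v ^ 2)⁻¹ := by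
  rw [norm_mul, Real.norm_of_nonneg (by positivity : (0 : ℝ) ≤ (1 + v ^ 2)⁻¹)]
  exact mul_le_mul_of_nonneg_right (f.norm_coe_le_norm x) (by positivity)

theorem continuous_cauchyAverage : Continuous fun p : ℝ × ℝ => cauchyAverage f p.1 p.2 :=
  continuous_of_dominated (fun _ => by fun_prop)
    (fun _ => .of_forall fun _ => f.norm_apply_mul_inv_one_add_sq_le _ _)
    (integrable_inv_one_add_sq.const_mul _) (.of_forall fun _ => by fun_prop)

theorem norm_cauchyAverage_le (e u : ℝ) : ‖cauchyAverage f e u‖ ≤ ‖f‖ * π := by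
  refine (norm_integral_le_of_norm_le (integrable_inv_one_add_sq.const_mul ‖f‖)
    (.of_forall fun _ => f.norm_apply_mul_inv_one_add_sq_le _ _)).trans_eq ?_
  rw [integral_const_mul, integral_univ_inv_one_add_sq]

theorem cauchyAverage_zero (u : ℝ) : cauchyAverage f 0 u = π * f u := by
  simp [cauchyAverage, integral_mul_const, integral_univ_inv_one_add_sq, mul_comm]

variable (m : Measure ℝ) [IsFiniteMeasure m]

theorem integral_mul_integral_halfPlanePoissonKernel {e : ℝ} (he : 0 < e) :
    ∫ x, f x * ∫ u, halfPlanePoissonKernel e x u ∂m = ∫ u, cauchyAverage f e u ∂m := by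
  have hF : Continuous fun p : ℝ × ℝ => f p.1 * halfPlanePoissonKernel e p.1 p.2 :=
    (f.continuous.comp continuous_fst).mul (continuous_halfPlanePoissonKernel he)
  have hFint : Integrable (fun p : ℝ × ℝ => f p.1 * halfPlanePoissonKernel e p.1 p.2)
      (volume.prod m) := by
    refine (integrable_prod_iff' hF.aestronglyMeasurable).2 ⟨.of_forall fun u => ?_, ?_⟩
    · exact (integrable_halfPlanePoissonKernel he u).bdd_mul
        f.continuous.aestronglyMeasurable (.of_forall f.norm_coe_le_norm)
    refine (integrable_const (‖f‖ * π)).mono'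
      hF.norm.stronglyMeasurable.integral_prod_left'.aestronglyMeasurable (.of_forall fun u => ?_)
    rw [Real.norm_of_nonneg (integral_nonneg fun _ => norm_nonneg _),
      ← integral_halfPlanePoissonKernel he u, ← integral_const_mul]
    refine integral_mono_of_nonneg (.of_forall fun _ => norm_nonneg _)
      ((integrable_halfPlanePoissonKernel he u).const_mul _) (.of_forall fun x => ?_)
    simp only [norm_mul, Real.norm_of_nonneg (halfPlanePoissonKernel_nonneg he x u)]
    exact mul_le_mul_of_nonneg_right (f.norm_coe_le_norm x) (halfPlanePoissonKernel_nonneg he x u)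
  calc ∫ x, f x * ∫ u, halfPlanePoissonKernel e x u ∂m
      = ∫ x, ∫ u, f x * halfPlanePoissonKernel e x u ∂m := by
        congr 1 with x; exact (integral_const_mul _ _).symm
    _ = ∫ u, (∫ x, f x * halfPlanePoissonKernel e x u) ∂m := integral_integral_swap hFint
    _ = ∫ u, cauchyAverage f e u ∂m := by simp_rw [integral_mul_halfPlanePoissonKernel he]

theorem tendsto_integral_mul_integral_halfPlanePoissonKernel :
    Tendsto (fun e => ∫ x, f x * ∫ u, halfPlanePoissonKernel e x u ∂m) (𝓝[>] 0)
      (𝓝 (π * ∫ u, f u ∂m)) := by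
  have hcont : Continuous fun e => ∫ u, cauchyAverage f e u ∂m :=
    continuous_of_dominated
      (fun e => (f.continuous_cauchyAverage.comp (.prodMk_right e)).aestronglyMeasurable)
      (fun e => .of_forall (f.norm_cauchyAverage_le e)) (integrable_const _)
      (.of_forall fun u => f.continuous_cauchyAverage.comp (.prodMk_left u))
  have hzero : ∫ u, cauchyAverage f 0 u ∂m = π * ∫ u, f u ∂m := by
    simp_rw [cauchyAverage_zero, integral_const_mul]
  rw [← hzero]
  refine ((hcont.tendsto 0).mono_left nhdsWithin_le_nhds).congr' ?_
  filter_upwards [self_mem_nhdsWithin] with e he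
  exact (f.integral_mul_integral_halfPlanePoissonKernel m he).symm

end BoundedContinuousFunction

theorem MeasureTheory.Measure.ext_of_cauchyTransform {m₁ m₂ : Measure ℝ} [IsFiniteMeasure m₁]
    [IsFiniteMeasure m₂] (h : ∀ z : ℂ, 0 < z.im → cauchyTransform m₁ z = cauchyTransform m₂ z) :
    m₁ = m₂ := by
  refine ext_of_forall_integral_eq_of_IsFiniteMeasure fun f => ?_
  have hpoisson : ∀ e > 0, ∀ x : ℝ,
      ∫ u, halfPlanePoissonKernel e x u ∂m₁ = ∫ u, halfPlanePoissonKernel e x u ∂m₂ :=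
    fun e he x => by
      have hz : 0 < (⟨x, e⟩ : ℂ).im := he
      rw [integral_halfPlanePoissonKernel_eq_neg_im_cauchyTransform m₁ hz,
        integral_halfPlanePoissonKernel_eq_neg_im_cauchyTransform m₂ hz, h _ hz]
  have hlim : Tendsto (fun e => ∫ x, f x * ∫ u, halfPlanePoissonKernel e x u ∂m₂) (𝓝[>] 0)
      (𝓝 (π * ∫ u, f u ∂m₁)) :=
    (f.tendsto_integral_mul_integral_halfPlanePoissonKernel m₁).congr'
    (eventually_nhdsWithin_of_forall fun e he => by simp_rw [hpoisson e he])
  exact mul_left_cancel₀ pi_ne_zero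
    (tendsto_nhds_unique hlim (f.tendsto_integral_mul_integral_halfPlanePoissonKernel m₂))

theorem MeasureTheory.Measure.integral_comp {α β E : Type*} [MeasurableSpace α]
    [MeasurableSpace β] [NormedAddCommGroup E] [NormedSpace ℝ E] {μ : Measure α}
    {κ : Kernel α β} {f : β → E} (hf : Integrable f (κ ∘ₘ μ)) :
    ∫ y, f y ∂(κ ∘ₘ μ) = ∫ x, ∫ y, f y ∂κ x ∂μ := by
  rw [Measure.comp_eq_comp_const_apply] at hf ⊢
  simpa using Kernel.integral_comp hf

theorem cauchyTransform_comp {α : Type*} [MeasurableSpace α] (κ : Kernel α ℝ) [IsFiniteKernel κ]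
    (ν : Measure α) [IsFiniteMeasure ν] {z : ℂ} (hz : 0 < z.im) :
    cauchyTransform (κ ∘ₘ ν) z = ∫ a, cauchyTransform (κ a) z ∂ν :=
  Measure.integral_comp (integrable_inv_sub_ofReal _ hz)

theorem transition_operators_semigroup_general
    (Hfun : ℝ → ℂ → ℂ)
    (hHmem : ∀ t : ℝ, 0 ≤ t → ∀ z : ℂ, 0 < z.im → 0 < (Hfun t z).im)
    (hHsem : ∀ s : ℝ, 0 ≤ s → ∀ t : ℝ, 0 ≤ t → ∀ z : ℂ, 0 < z.im →
      Hfun (s + t) z = Hfun s (Hfun t z))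
    (μ : ℝ → ℝ → Measure ℝ)
    (hProb : ∀ t : ℝ, 0 ≤ t → ∀ x : ℝ, IsProbabilityMeasure (μ t x))
    (hMeas : ∀ t : ℝ, 0 ≤ t → Measurable (μ t))
    (hChar : ∀ t : ℝ, 0 ≤ t → ∀ (x : ℝ) (z : ℂ), 0 < z.im →
      (∫ y : ℝ, (z - (y : ℂ))⁻¹ ∂(μ t x))⁻¹ = Hfun t z - (x : ℂ)) :
    ∀ s : ℝ, 0 ≤ s → ∀ t : ℝ, 0 ≤ t →
      ∀ f : ℝ → ℝ, Continuous f → (∃ C, ∀ x, |f x| ≤ C) →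
        ∀ x : ℝ, ∫ y, (∫ u, f u ∂(μ t y)) ∂(μ s x) = ∫ y, f y ∂(μ (s + t) x) := by
  intro s hs t ht f hf ⟨C, hC⟩ x
  have hst : 0 ≤ s + t := add_nonneg hs ht
  have hG : ∀ r, 0 ≤ r → ∀ (a : ℝ) (z : ℂ), 0 < z.im →
      cauchyTransform (μ r a) z = (Hfun r z - a)⁻¹ :=
    fun r hr a z hz => inv_eq_iff_eq_inv.mp (hChar r hr a z hz)
  let κ : Kernel ℝ ℝ := ⟨μ t, hMeas t ht⟩
  have : IsMarkovKernel κ := ⟨hProb t ht⟩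
  have := hProb s hs x
  have := hProb (s + t) hst x
  have hcomp : κ ∘ₘ μ s x = μ (s + t) x := by
    refine Measure.ext_of_cauchyTransform fun z hz => ?_
    calc cauchyTransform (κ ∘ₘ μ s x) z = ∫ y, (Hfun t z - y)⁻¹ ∂μ s x := by
          rw [cauchyTransform_comp κ _ hz]
          exact integral_congr_ae (.of_forall fun y => hG t ht y z hz)
      _ = (Hfun s (Hfun t z) - x)⁻¹ := hG s hs x _ (hHmem t ht z hz)
      _ = cauchyTransform (μ (s + t) x) z := by rw [hG _ hst x z hz, hHsem s hs t ht z hz]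
  let F := BoundedContinuousFunction.ofNormedAddCommGroup f hf C hC
  calc ∫ y, (∫ u, f u ∂(μ t y)) ∂(μ s x) = ∫ y, F y ∂(κ ∘ₘ μ s x) :=
        (Measure.integral_comp (κ := κ) (F.integrable _)).symm
    _ = ∫ y, f y ∂(μ (s + t) x) := by rw [hcomp]; rfl

/-- The Markov transition operators `T_t f(x) = ∫ f dμ_{t,x}`, where `μ_{t,x}` has
reciprocal Cauchy transform `H_t(z) − x` and `(H_t)` is the composition semigroup of
reciprocal Cauchy transforms of a monotone convolution semigroup, form a semigroup:
`T_s (T_t f) = T_{s+t} f` for all `f ∈ C_b(ℝ)`. -/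
theorem transition_operators_semigroup
    (Hfun : ℝ → ℂ → ℂ)
    (hH0 : ∀ z : ℂ, 0 < z.im → Hfun 0 z = z)
    (hHmem : ∀ t : ℝ, 0 ≤ t → ∀ z : ℂ, 0 < z.im → 0 < (Hfun t z).im)
    (hHsem : ∀ s : ℝ, 0 ≤ s → ∀ t : ℝ, 0 ≤ t → ∀ z : ℂ, 0 < z.im →
      Hfun (s + t) z = Hfun s (Hfun t z))
    (μ : ℝ → ℝ → Measure ℝ)
    (hProb : ∀ t : ℝ, 0 ≤ t → ∀ x : ℝ, IsProbabilityMeasure (μ t x))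
    (hMeas : ∀ t : ℝ, 0 ≤ t → Measurable (μ t))
    (hChar : ∀ t : ℝ, 0 ≤ t → ∀ (x : ℝ) (z : ℂ), 0 < z.im →
      (∫ y : ℝ, (z - (y : ℂ))⁻¹ ∂(μ t x))⁻¹ = Hfun t z - (x : ℂ)) :
    ∀ s : ℝ, 0 ≤ s → ∀ t : ℝ, 0 ≤ t →
      ∀ f : ℝ → ℝ, Continuous f → (∃ C, ∀ x, |f x| ≤ C) →
        ∀ x : ℝ, ∫ y, (∫ u, f u ∂(μ t y)) ∂(μ s x) = ∫ y, f y ∂(μ (s + t) x) :=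
  transition_operators_semigroup_general Hfun hHmem hHsem μ hProb hMeas hChar
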